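/- Let f be a Boolean function on n variables, let g = (g_0,…,g_{n-1}) : 𝔽₂^m → 𝔽₂ⁿ be a vectorial Boolean function, and let I ⊆ {0,…,m-1} with |I| = d. Suppose V = (V_0,…,V_{n-1}) with V_i : 𝔽₂^I → ℤ ∪ {-∞} satisfies vdeg_I(g_i) ≼ V_i for all 0 ≤ i ≤ n-1. Then vdeg_I(f ∘ g) ≼ VDEG_d(f, V) (identifying 𝔽₂^I with 𝔽₂^d), i.e., every component of the vector degree of the composite f ∘ g is bounded above by the corresponding component of the vector numeric mapping. -/
import Mathlib


open Finset

section Core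

variable {α : Type*}

/-- The monomial `x^u` over `𝔽₂`. -/
def monom [Fintype α] (u x : α → ZMod 2) : ZMod 2 :=
  ∏ i, if u i = 1 then x i else 1

/-- The ANF coefficient of the monomial `x^u` in `f`, via Möbius inversion. -/
def anf [Fintype α] [DecidableEq α] (f : (α → ZMod 2) → ZMod 2) (u : α → ZMod 2) : ZMod 2 :=
  ∑ v ∈ Finset.univ.filter (fun v : α → ZMod 2 => ∀ i, v i = 1 → u i = 1), f v

/-- Hamming weight. -/
def wt [Fintype α] (u : α → ZMod 2) : ℕ :=
  (Finset.univ.filter (fun i => u i = 1)).card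

/-- Algebraic degree, in `ℤ ∪ {-∞}`. -/
def deg [Fintype α] [DecidableEq α] (f : (α → ZMod 2) → ZMod 2) : WithBot ℤ :=
  (Finset.univ.filter (fun u : α → ZMod 2 => anf f u = 1)).sup
    (fun u => ((wt u : ℤ) : WithBot ℤ))

/-- Combine an assignment on `I` with one on `Iᶜ` to a full assignment. -/
def combine [Fintype α] [DecidableEq α] (I : Finset α) (w : ↥I → ZMod 2)
    (y : ↥Iᶜ → ZMod 2) : α → ZMod 2 :=
  fun i => if h : i ∈ I then w ⟨i, h⟩ else y ⟨i, Finset.mem_compl.mpr h⟩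

/-- The coefficient function `g_{f,w}` of `x_I^w` in `f`, a Boolean function of `x_{Iᶜ}`. -/
def coeffFun [Fintype α] [DecidableEq α] (f : (α → ZMod 2) → ZMod 2) (I : Finset α)
    (w : ↥I → ZMod 2) : (↥Iᶜ → ZMod 2) → ZMod 2 :=
  fun y => ∑ t : ↥Iᶜ → ZMod 2, anf f (combine I w t) * monom t y

/-- The vector degree of `f` w.r.t. the index set `I`. -/
def vdeg [Fintype α] [DecidableEq α] (f : (α → ZMod 2) → ZMod 2) (I : Finset α)
    (w : ↥I → ZMod 2) : WithBot ℤ :=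
  deg (coeffFun f I w)

/-- `f` with the variables outside `S` set to `0`. -/
def restrict0 [Fintype α] [DecidableEq α] (f : (α → ZMod 2) → ZMod 2) (S : Finset α) :
    (α → ZMod 2) → ZMod 2 :=
  fun x => f (fun i => if i ∈ S then x i else 0)

/-- Combine an assignment on `I₁` with one on `I₂ \ I₁` to an assignment on `I₂`. -/
def joinFn [DecidableEq α] {I₁ I₂ : Finset α} (w : ↥I₁ → ZMod 2)
    (w' : ↥(I₂ \ I₁) → ZMod 2) : ↥I₂ → ZMod 2 :=
  fun j => if h : (j : α) ∈ I₁ then w ⟨(j : α), h⟩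
           else w' ⟨(j : α), Finset.mem_sdiff.mpr ⟨j.2, h⟩⟩

end Core

/-- Coordinatewise OR of the family `W i`, over indices `i` with `u i = 1`. -/
def orFam {n : ℕ} {β : Type*} (u : Fin n → ZMod 2) (W : Fin n → β → ZMod 2) :
    β → ZMod 2 :=
  fun j => if ∃ i, u i = 1 ∧ W i j = 1 then 1 else 0

/-- The vector numeric mapping `VDEG_d(f, V)`. -/
def VDEG {n : ℕ} {δ : Type*} [Fintype δ] [DecidableEq δ]
    (f : (Fin n → ZMod 2) → ZMod 2) (V : Fin n → (δ → ZMod 2) → WithBot ℤ)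
    (w : δ → ZMod 2) : WithBot ℤ :=
  (Finset.univ.filter (fun p : (Fin n → ZMod 2) × (Fin n → δ → ZMod 2) =>
      anf f p.1 = 1 ∧ (∀ i, p.1 i = 0 → p.2 i = 0) ∧ w = orFam p.1 p.2)).sup
    (fun p => ∑ i ∈ Finset.univ.filter (fun i => p.1 i = 1), V i (p.2 i))

/-- Monomial transition `π_u(x) → π_v(g(x))`. -/
def MonTrans {a b : ℕ} (g : (Fin a → ZMod 2) → (Fin b → ZMod 2))
    (u : Fin a → ZMod 2) (v : Fin b → ZMod 2) : Prop :=
  anf (fun x => monom v (g x)) u = 1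

/-- Monomial trails from level `a` to level `b`, with fixed endpoints `u`, `v`
(trails are normalized to be `0` outside the levels `a, …, b`). -/
def Trails (n : ℕ → ℕ) (f : ∀ i, (Fin (n i) → ZMod 2) → (Fin (n (i + 1)) → ZMod 2))
    (a b : ℕ) (u : Fin (n a) → ZMod 2) (v : Fin (n b) → ZMod 2) :
    Set (∀ i, Fin (n i) → ZMod 2) :=
  {t | t a = u ∧ t b = v ∧ (∀ i, a ≤ i → i < b → MonTrans (f i) (t i) (t (i + 1))) ∧
       (∀ i, i < a → t i = fun _ => 0) ∧ (∀ i, b < i → t i = fun _ => 0)}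

/-- The iterated composition `f_{b-1} ∘ ⋯ ∘ f_a` (meaningful for `a ≤ b`). -/
def iterComp (n : ℕ → ℕ) (f : ∀ i, (Fin (n i) → ZMod 2) → (Fin (n (i + 1)) → ZMod 2))
    (a : ℕ) : (b : ℕ) → (Fin (n a) → ZMod 2) → (Fin (n b) → ZMod 2)
  | 0 => fun x j => if h : a = 0 then x (Fin.cast (show n 0 = n a by rw [h]) j) else 0
  | b + 1 =>
      if h : a = b + 1 then fun x j => x (Fin.cast (show n (b + 1) = n a by rw [h]) j)
      else fun x => f b (iterComp n f a b x)

section Iterated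

/-- Embed an index set `J ⊆ {0,…,n-1}` into the joint index set of size `n' 0 = n + m`. -/
def liftJ {n m N0 : ℕ} (h0 : N0 = n + m) (J : Finset (Fin n)) : Finset (Fin N0) :=
  J.image (fun (j : Fin n) => (⟨j.val, by have := j.isLt; omega⟩ : Fin N0))

/-- Set the `x`-variables outside `S` to zero in a joint assignment. -/
def mask0 {n m N0 : ℕ} (h0 : N0 = n + m) (S : Finset (Fin n)) (z : Fin N0 → ZMod 2) :
    Fin N0 → ZMod 2 :=
  fun i => if h : (i : ℕ) < n then (if (⟨(i : ℕ), h⟩ : Fin n) ∈ S then z i else 0) else z i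

/-- The iterated estimated vector degrees `V_t^S`. -/
def Vt {n m : ℕ} (n' : ℕ → ℕ) (h0 : n' 0 = n + m)
    (f : ∀ t, (Fin (n' t) → ZMod 2) → (Fin (n' (t + 1)) → ZMod 2))
    (J S : Finset (Fin n)) :
    (t : ℕ) → Fin (n' (t + 1)) → (↥(liftJ h0 J) → ZMod 2) → WithBot ℤ
  | 0 => fun i => vdeg (fun z => f 0 (mask0 h0 S z) i) (liftJ h0 J)
  | t + 1 => fun i => VDEG (fun y => f (t + 1) y i) (Vt n' h0 f J S t)

/-- The estimated vector degree `vdeg-hat^S` (here `r = s + 2`). -/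
def vdegHat {n m : ℕ} (n' : ℕ → ℕ) (h0 : n' 0 = n + m)
    (f : ∀ t, (Fin (n' t) → ZMod 2) → (Fin (n' (t + 1)) → ZMod 2))
    (J : Finset (Fin n)) (s : ℕ) (S : Finset (Fin n)) :
    (↥(liftJ h0 J) → ZMod 2) → WithBot ℤ :=
  VDEG (fun y => monom (fun _ => 1) (f (s + 1) y)) (Vt n' h0 f J S s)

/-- The estimated degree `deg-hat^S`. -/
noncomputable def degHat {n m : ℕ} (n' : ℕ → ℕ) (h0 : n' 0 = n + m)
    (f : ∀ t, (Fin (n' t) → ZMod 2) → (Fin (n' (t + 1)) → ZMod 2))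
    (J : Finset (Fin n)) (s : ℕ) (S : Finset (Fin n)) : WithBot ℤ :=
  Finset.univ.sup (fun w : ↥(liftJ h0 J) → ZMod 2 =>
    vdegHat n' h0 f J s S w + ((wt w : ℤ) : WithBot ℤ))

end Iterated
section Aux

variable {α : Type*}

lemma z2 : ∀ z : ZMod 2, z = 0 ∨ z = 1 := by decide

lemma z2' : ∀ z : ZMod 2, z ≠ 0 → z = 1 := by decide

lemma z2'' : ∀ z : ZMod 2, z ≠ 1 → z = 0 := by decide

lemma monom_eq_ite [Fintype α] (u x : α → ZMod 2) :
    monom u x = if (∀ i, u i = 1 → x i = 1) then 1 else 0 := by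
  by_cases h : ∀ i, u i = 1 → x i = 1
  · rw [if_pos h]
    apply Finset.prod_eq_one
    intro i _
    by_cases hu : u i = 1
    · simp [hu, h i hu]
    · simp [hu]
  · rw [if_neg h]
    push_neg at h
    obtain ⟨i, hu, hx⟩ := h
    apply Finset.prod_eq_zero (Finset.mem_univ i)
    simp [hu, z2'' _ hx]

/-- Counting lemma: the number of `v` with `a ≼ v ≼ b` is odd iff `a = b`. -/
lemma count_between [Fintype α] [DecidableEq α] (a b : α → ZMod 2) :
    (∑ v ∈ Finset.univ.filter (fun v : α → ZMod 2 =>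
        (∀ i, v i = 1 → b i = 1) ∧ (∀ i, a i = 1 → v i = 1)), (1 : ZMod 2))
      = if a = b then 1 else 0 := by
  by_cases hab : a = b
  · subst hab
    rw [if_pos rfl]
    have hs : Finset.univ.filter (fun v : α → ZMod 2 =>
        (∀ i, v i = 1 → a i = 1) ∧ (∀ i, a i = 1 → v i = 1)) = {a} := by
      ext v
      simp only [Finset.mem_filter, Finset.mem_univ, true_and, Finset.mem_singleton]
      constructor
      · rintro ⟨h1, h2⟩
        funext i
        rcases z2 (v i) with h | h
        · rcases z2 (a i) with h' | h'
          · rw [h, h']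
          · exact absurd (h2 i h') (by rw [h]; decide)
        · rw [h, h1 i h]
      · rintro rfl; exact ⟨fun _ h => h, fun _ h => h⟩
    rw [hs, Finset.sum_singleton]
  · rw [if_neg hab]
    by_cases hle : ∀ i, a i = 1 → b i = 1
    · -- there is i0 with b i0 = 1 and a i0 = 0
      have hex : ∃ i0, b i0 = 1 ∧ a i0 ≠ 1 := by
        by_contra hc
        push_neg at hc
        apply hab
        funext i
        rcases z2 (a i) with h | h
        · rcases z2 (b i) with h' | h'
          · rw [h, h']
          · exact absurd (hc i h') (by rw [h]; decide)
        · rw [h, (hle i h).symm]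
      obtain ⟨i0, hb0, ha0⟩ := hex
      refine Finset.sum_involution (fun v _ => Function.update v i0 (v i0 + 1))
        (fun v _ => by decide) ?_ (fun v hv => ?_) (fun v _ => ?_)
      · intro v _ h hcon
        have := congrFun hcon i0
        beta_reduce at this
        rw [Function.update_self] at this
        revert this
        rcases z2 (v i0) with h | h <;> rw [h] <;> decide
      · simp only [Finset.mem_filter, Finset.mem_univ, true_and] at hv ⊢
        obtain ⟨h1, h2⟩ := hv
        constructor
        · intro i hi
          by_cases hii : i = i0
          · subst hii; exact hb0
          · rw [Function.update_of_ne hii] at hi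
            exact h1 i hi
        · intro i hi
          by_cases hii : i = i0
          · subst hii; exact absurd hi ha0
          · rw [Function.update_of_ne hii]
            exact h2 i hi
      · funext i
        beta_reduce
        by_cases hii : i = i0
        · subst hii
          rw [Function.update_self, Function.update_self]
          rcases z2 (v i) with h | h <;> rw [h] <;> decide
        · rw [Function.update_of_ne hii, Function.update_of_ne hii]
    · have hs : Finset.univ.filter (fun v : α → ZMod 2 =>
          (∀ i, v i = 1 → b i = 1) ∧ (∀ i, a i = 1 → v i = 1)) = ∅ := by
        ext v
        simp only [Finset.mem_filter, Finset.mem_univ, true_and, Finset.notMem_empty,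
          iff_false, not_and]
        intro h1 h2
        exact hle fun i hi => h1 i (h2 i hi)
      rw [hs, Finset.sum_empty]

lemma anf_monom [Fintype α] [DecidableEq α] (u t : α → ZMod 2) :
    anf (monom u) t = if t = u then 1 else 0 := by
  unfold anf
  have h1 : ∀ v ∈ Finset.univ.filter (fun v : α → ZMod 2 => ∀ i, v i = 1 → t i = 1),
      monom u v = if (∀ i, u i = 1 → v i = 1) then 1 else 0 := fun v _ => monom_eq_ite u v
  rw [Finset.sum_congr rfl h1, Finset.sum_ite, Finset.sum_const_zero, add_zero,
    Finset.filter_filter]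
  rw [count_between u t]
  by_cases h : u = t
  · rw [if_pos h, if_pos h.symm]
  · rw [if_neg h, if_neg (fun ht => h ht.symm)]

lemma anf_inversion [Fintype α] [DecidableEq α] (f : (α → ZMod 2) → ZMod 2)
    (x : α → ZMod 2) : f x = ∑ u : α → ZMod 2, anf f u * monom u x := by
  unfold anf
  have step : ∀ u : α → ZMod 2,
      (∑ v ∈ Finset.univ.filter (fun v : α → ZMod 2 => ∀ i, v i = 1 → u i = 1), f v)
        * monom u x
      = ∑ v : α → ZMod 2, f v * ((if (∀ i, v i = 1 → u i = 1) then 1 else 0) *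
          (if (∀ i, u i = 1 → x i = 1) then 1 else 0)) := by
    intro u
    rw [Finset.sum_filter, Finset.sum_mul]
    apply Finset.sum_congr rfl
    intro v _
    rw [monom_eq_ite]
    by_cases h : ∀ i, v i = 1 → u i = 1 <;> simp [h]
  rw [Finset.sum_congr rfl (fun u _ => step u), Finset.sum_comm]
  have inner : ∀ v : α → ZMod 2,
      (∑ u : α → ZMod 2, f v * ((if (∀ i, v i = 1 → u i = 1) then 1 else 0) *
          (if (∀ i, u i = 1 → x i = 1) then 1 else 0)))
      = f v * (if v = x then 1 else 0) := by
    intro v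
    rw [← Finset.mul_sum]
    congr 1
    have : ∀ u : α → ZMod 2,
        ((if (∀ i, v i = 1 → u i = 1) then 1 else 0) *
          (if (∀ i, u i = 1 → x i = 1) then 1 else 0) : ZMod 2)
        = if ((∀ i, u i = 1 → x i = 1) ∧ (∀ i, v i = 1 → u i = 1)) then 1 else 0 := by
      intro u
      by_cases h1 : ∀ i, v i = 1 → u i = 1
      · by_cases h2 : ∀ i, u i = 1 → x i = 1
        · rw [if_pos h1, if_pos h2, if_pos ⟨h2, h1⟩, one_mul]
        · rw [if_pos h1, if_neg h2, if_neg (fun hc => h2 hc.1), one_mul]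
      · by_cases h2 : ∀ i, u i = 1 → x i = 1
        · rw [if_neg h1, if_pos h2, if_neg (fun hc => h1 hc.2), zero_mul]
        · rw [if_neg h1, if_neg h2, if_neg (fun hc => h1 hc.2), zero_mul]
    rw [Finset.sum_congr rfl (fun u _ => this u), ← Finset.sum_filter_add_sum_filter_not
      Finset.univ (fun u : α → ZMod 2 => (∀ i, u i = 1 → x i = 1) ∧ (∀ i, v i = 1 → u i = 1))]
    have e2 : (∑ u ∈ Finset.univ.filter (fun u : α → ZMod 2 =>
        ¬((∀ i, u i = 1 → x i = 1) ∧ (∀ i, v i = 1 → u i = 1))),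
        (if ((∀ i, u i = 1 → x i = 1) ∧ (∀ i, v i = 1 → u i = 1)) then (1:ZMod 2) else 0)) = 0 := by
      apply Finset.sum_eq_zero
      intro u hu
      rw [Finset.mem_filter] at hu
      rw [if_neg hu.2]
    have e1 : (∑ u ∈ Finset.univ.filter (fun u : α → ZMod 2 =>
        ((∀ i, u i = 1 → x i = 1) ∧ (∀ i, v i = 1 → u i = 1))),
        (if ((∀ i, u i = 1 → x i = 1) ∧ (∀ i, v i = 1 → u i = 1)) then (1:ZMod 2) else 0))
        = ∑ u ∈ Finset.univ.filter (fun u : α → ZMod 2 =>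
        ((∀ i, u i = 1 → x i = 1) ∧ (∀ i, v i = 1 → u i = 1))), (1:ZMod 2) := by
      apply Finset.sum_congr rfl
      intro u hu
      rw [Finset.mem_filter] at hu
      rw [if_pos hu.2]
    rw [e1, e2, add_zero, count_between v x]
  rw [Finset.sum_congr rfl (fun v _ => inner v)]
  simp [Finset.sum_ite_eq' Finset.univ x f]

lemma anf_sum [Fintype α] [DecidableEq α] {ι : Type*} (s : Finset ι)
    (F : ι → (α → ZMod 2) → ZMod 2) (t : α → ZMod 2) :
    anf (fun x => ∑ j ∈ s, F j x) t = ∑ j ∈ s, anf (F j) t := by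
  unfold anf
  exact Finset.sum_comm

lemma anf_const_mul [Fintype α] [DecidableEq α] (c : ZMod 2)
    (F : (α → ZMod 2) → ZMod 2) (t : α → ZMod 2) :
    anf (fun x => c * F x) t = c * anf F t := by
  unfold anf
  rw [Finset.mul_sum]

end Aux
section Aux2

variable {α : Type*}

lemma anf_coeffFun [Fintype α] [DecidableEq α] (f : (α → ZMod 2) → ZMod 2)
    (I : Finset α) (w : ↥I → ZMod 2) (s : ↥Iᶜ → ZMod 2) :
    anf (coeffFun f I w) s = anf f (combine I w s) := by
  have h0 : coeffFun f I w
      = fun y => ∑ t : ↥Iᶜ → ZMod 2, anf f (combine I w t) * monom t y := rfl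
  rw [h0, anf_sum]
  have h1 : ∀ t : ↥Iᶜ → ZMod 2,
      anf (fun y => anf f (combine I w t) * monom t y) s
        = if s = t then anf f (combine I w t) else 0 := by
    intro t
    rw [anf_const_mul, anf_monom]
    by_cases h : s = t
    · rw [if_pos h, if_pos h, mul_one]
    · rw [if_neg h, if_neg h, mul_zero]
  rw [Finset.sum_congr rfl (fun t _ => h1 t), Finset.sum_ite_eq]
  rw [if_pos (Finset.mem_univ s)]

/-- Pointwise OR of two `𝔽₂`-vectors. -/
def bor (u v : α → ZMod 2) : α → ZMod 2 := fun j => if u j = 1 ∨ v j = 1 then 1 else 0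

lemma bor_eq_one (u v : α → ZMod 2) (j : α) : bor u v j = 1 ↔ (u j = 1 ∨ v j = 1) := by
  unfold bor
  by_cases h : u j = 1 ∨ v j = 1
  · simp [h]
  · simp [h]

lemma monom_bor [Fintype α] (u v x : α → ZMod 2) :
    monom u x * monom v x = monom (bor u v) x := by
  rw [monom_eq_ite, monom_eq_ite, monom_eq_ite]
  have hc : (∀ j, bor u v j = 1 → x j = 1)
      ↔ ((∀ j, u j = 1 → x j = 1) ∧ (∀ j, v j = 1 → x j = 1)) := by
    constructor
    · intro h
      exact ⟨fun j hj => h j ((bor_eq_one u v j).mpr (Or.inl hj)),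
             fun j hj => h j ((bor_eq_one u v j).mpr (Or.inr hj))⟩
    · rintro ⟨h1, h2⟩ j hj
      rcases (bor_eq_one u v j).mp hj with h | h
      · exact h1 j h
      · exact h2 j h
  by_cases h1 : ∀ j, u j = 1 → x j = 1
  · by_cases h2 : ∀ j, v j = 1 → x j = 1
    · rw [if_pos h1, if_pos h2, if_pos (hc.mpr ⟨h1, h2⟩), one_mul]
    · rw [if_pos h1, if_neg h2, if_neg (fun hcon => h2 (hc.mp hcon).2), one_mul]
  · by_cases h2 : ∀ j, v j = 1 → x j = 1
    · rw [if_neg h1, if_pos h2, if_neg (fun hcon => h1 (hc.mp hcon).1), zero_mul]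
    · rw [if_neg h1, if_neg h2, if_neg (fun hcon => h1 (hc.mp hcon).1), zero_mul]

lemma anf_mul [Fintype α] [DecidableEq α] (F G : (α → ZMod 2) → ZMod 2)
    (z : α → ZMod 2) (h : anf (fun x => F x * G x) z = 1) :
    ∃ z1 z2, anf F z1 = 1 ∧ anf G z2 = 1 ∧ z = bor z1 z2 := by
  have hFG : (fun x => F x * G x) = fun x => ∑ p : (α → ZMod 2) × (α → ZMod 2),
      (anf F p.1 * anf G p.2) * monom (bor p.1 p.2) x := by
    funext x
    rw [Fintype.sum_prod_type]
    rw [anf_inversion F x, anf_inversion G x, Finset.sum_mul_sum]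
    apply Finset.sum_congr rfl
    intro u _
    apply Finset.sum_congr rfl
    intro v _
    rw [show (anf F u * monom u x) * (anf G v * monom v x)
      = (anf F u * anf G v) * (monom u x * monom v x) by ring, monom_bor]
  rw [hFG, anf_sum] at h
  have hne : ∃ p ∈ (Finset.univ : Finset ((α → ZMod 2) × (α → ZMod 2))),
      anf (fun x => (anf F p.1 * anf G p.2) * monom (bor p.1 p.2) x) z ≠ 0 := by
    apply Finset.exists_ne_zero_of_sum_ne_zero
    rw [h]; decide
  obtain ⟨p, _, hp⟩ := hne
  rw [anf_const_mul, anf_monom] at hp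
  by_cases hz : z = bor p.1 p.2
  · rw [if_pos hz, mul_one] at hp
    refine ⟨p.1, p.2, ?_, ?_, hz⟩
    · exact z2' _ (fun h0 => hp (by rw [h0, zero_mul]))
    · exact z2' _ (fun h0 => hp (by rw [h0, mul_zero]))
  · rw [if_neg hz, mul_zero] at hp
    exact absurd rfl hp

lemma anf_one [Fintype α] [DecidableEq α] (z : α → ZMod 2)
    (h : anf (fun _ => (1 : ZMod 2)) z = 1) : z = fun _ => 0 := by
  have h1 : (fun _ : α → ZMod 2 => (1 : ZMod 2)) = monom (fun _ => 0) := by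
    funext x
    unfold monom
    rw [eq_comm]
    apply Finset.prod_eq_one
    intro i _
    simp
  rw [h1, anf_monom] at h
  by_cases hz : z = fun _ => 0
  · exact hz
  · rw [if_neg hz] at h
    exact absurd h (by decide)

lemma anf_prod {ι : Type*} [Fintype α] [DecidableEq α] [DecidableEq ι]
    (S : Finset ι) (G : ι → (α → ZMod 2) → ZMod 2) :
    ∀ z, anf (fun x => ∏ i ∈ S, G i x) z = 1 →
      ∃ U : ι → α → ZMod 2, (∀ i, i ∉ S → U i = fun _ => 0) ∧
        (∀ j, (z j = 1 ↔ ∃ i ∈ S, U i j = 1)) ∧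
        (∀ i ∈ S, anf (G i) (U i) = 1) := by
  classical
  induction S using Finset.induction_on with
  | empty =>
    intro z h
    have h1 : (fun x : α → ZMod 2 => ∏ i ∈ (∅ : Finset ι), G i x)
        = fun _ => (1 : ZMod 2) := by
      funext x; rw [Finset.prod_empty]
    rw [h1] at h
    have hz := anf_one z h
    refine ⟨fun _ _ => 0, fun _ _ => rfl, ?_, by simp⟩
    intro j
    rw [hz]
    simp
  | @insert a S' ha IH =>
    intro z h
    have h1 : (fun x => ∏ i ∈ insert a S', G i x)
        = fun x => G a x * ∏ i ∈ S', G i x := by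
      funext x; rw [Finset.prod_insert ha]
    rw [h1] at h
    obtain ⟨z1, z2, hz1, hz2, hz⟩ := anf_mul _ _ _ h
    obtain ⟨U', hU0, hU2, hUanf⟩ := IH z2 hz2
    refine ⟨Function.update U' a z1, ?_, ?_, ?_⟩
    · intro i hi
      rw [Finset.mem_insert, not_or] at hi
      rw [Function.update_of_ne hi.1]
      exact hU0 i hi.2
    · intro j
      rw [hz]
      rw [bor_eq_one]
      constructor
      · rintro (h | h)
        · exact ⟨a, Finset.mem_insert_self a S', by rw [Function.update_self]; exact h⟩
        · obtain ⟨i, hiS, hi⟩ := (hU2 j).mp h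
          refine ⟨i, Finset.mem_insert_of_mem hiS, ?_⟩
          have hne : i ≠ a := by rintro rfl; exact ha hiS
          rw [Function.update_of_ne hne]
          exact hi
      · rintro ⟨i, hiS, hi⟩
        rcases Finset.mem_insert.mp hiS with he | hiS'
        · subst he
          rw [Function.update_self] at hi
          exact Or.inl hi
        · right
          apply (hU2 j).mpr
          refine ⟨i, hiS', ?_⟩
          have hne : i ≠ a := by rintro rfl; exact ha hiS'
          rw [Function.update_of_ne hne] at hi
          exact hi
    · intro i hi
      rcases Finset.mem_insert.mp hi with he | hiS'
      · subst he
        rw [Function.update_self]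
        exact hz1
      · have hne : i ≠ a := by rintro rfl; exact ha hiS'
        rw [Function.update_of_ne hne]
        exact hUanf i hiS'

lemma combine_res [Fintype α] [DecidableEq α] (I : Finset α) (z : α → ZMod 2) :
    combine I (fun j : ↥I => z j) (fun j : ↥Iᶜ => z j) = z := by
  funext i
  unfold combine
  by_cases h : i ∈ I
  · rw [dif_pos h]
  · rw [dif_neg h]

lemma combine_coeI [Fintype α] [DecidableEq α] (I : Finset α) (w : ↥I → ZMod 2)
    (t : ↥Iᶜ → ZMod 2) (j : ↥I) : combine I w t j = w j := by
  unfold combine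
  rw [dif_pos j.2]

lemma combine_coeIc [Fintype α] [DecidableEq α] (I : Finset α) (w : ↥I → ZMod 2)
    (t : ↥Iᶜ → ZMod 2) (j : ↥Iᶜ) : combine I w t j = t j := by
  unfold combine
  rw [dif_neg (Finset.mem_compl.mp j.2)]

end Aux2

/-- The vector numeric mapping bounds the vector degree of a composite:
if `vdeg_I(g_i) ≼ V_i` for all `i`, then `vdeg_I(f ∘ g) ≼ VDEG(f, V)`. -/
theorem vdeg_comp_le_VDEG {m n : ℕ} (f : (Fin n → ZMod 2) → ZMod 2)
    (g : (Fin m → ZMod 2) → (Fin n → ZMod 2)) (I : Finset (Fin m))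
    (V : Fin n → (↥I → ZMod 2) → WithBot ℤ)
    (hV : ∀ i w, vdeg (fun x => g x i) I w ≤ V i w)
    (w : ↥I → ZMod 2) :
    vdeg (fun x => f (g x)) I w ≤ VDEG f V w := by
  classical
  unfold vdeg deg
  apply Finset.sup_le
  intro s hs
  rw [Finset.mem_filter] at hs
  have hanf : anf (fun x => f (g x)) (combine I w s) = 1 := by
    rw [← anf_coeffFun]
    exact hs.2
  have hcomp : (fun x => f (g x)) = fun x => ∑ u : Fin n → ZMod 2,
      anf f u * monom u (g x) := by
    funext x
    exact anf_inversion f (g x)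
  rw [hcomp, anf_sum] at hanf
  obtain ⟨u, _, hu⟩ := Finset.exists_ne_zero_of_sum_ne_zero
    (show _ ≠ (0 : ZMod 2) by rw [hanf]; decide)
  rw [anf_const_mul] at hu
  have hfu : anf f u = 1 := z2' _ (fun h0 => hu (by rw [h0, zero_mul]))
  have hmon : anf (fun x => monom u (g x)) (combine I w s) = 1 :=
    z2' _ (fun h0 => hu (by rw [h0, mul_zero]))
  have hprodform : (fun x : Fin m → ZMod 2 => monom u (g x)) =
      fun x => ∏ i ∈ Finset.univ.filter (fun i => u i = 1), g x i := by
    funext x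
    unfold monom
    rw [Finset.prod_filter]
  rw [hprodform] at hmon
  obtain ⟨U, hU0, hUor, hUanf⟩ :=
    anf_prod (Finset.univ.filter (fun i : Fin n => u i = 1)) (fun i x => g x i) _ hmon
  set S := Finset.univ.filter (fun i : Fin n => u i = 1) with hS
  set W : Fin n → ↥I → ZMod 2 := fun i j => U i j with hW
  set T : Fin n → ↥Iᶜ → ZMod 2 := fun i j => U i j with hT
  have hUcomb : ∀ i, U i = combine I (W i) (T i) := by
    intro i
    exact (combine_res I (U i)).symm
  -- each coefficient function of g i
  have hcoef : ∀ i ∈ S, anf (coeffFun (fun x => g x i) I (W i)) (T i) = 1 := by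
    intro i hi
    rw [anf_coeffFun, ← hUcomb i]
    exact hUanf i hi
  -- weight bound
  have hwt : wt s ≤ ∑ i ∈ S, wt (T i) := by
    have hsub : Finset.univ.filter (fun j : ↥Iᶜ => s j = 1)
        ⊆ S.biUnion (fun i => Finset.univ.filter (fun j : ↥Iᶜ => T i j = 1)) := by
      intro j hj
      rw [Finset.mem_filter] at hj
      have h1 : combine I w s (j : Fin m) = 1 := by
        rw [combine_coeIc]
        exact hj.2
      obtain ⟨i, hiS, hi⟩ := (hUor (j : Fin m)).mp h1
      rw [Finset.mem_biUnion]
      exact ⟨i, hiS, Finset.mem_filter.mpr ⟨Finset.mem_univ _, hi⟩⟩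
    calc wt s ≤ (S.biUnion (fun i => Finset.univ.filter (fun j : ↥Iᶜ => T i j = 1))).card :=
          Finset.card_le_card hsub
      _ ≤ ∑ i ∈ S, wt (T i) := Finset.card_biUnion_le
  -- membership of the witness pair in the VDEG filter
  have hmem : (u, W) ∈ Finset.univ.filter
      (fun p : (Fin n → ZMod 2) × (Fin n → ↥I → ZMod 2) =>
        anf f p.1 = 1 ∧ (∀ i, p.1 i = 0 → p.2 i = 0) ∧ w = orFam p.1 p.2) := by
    rw [Finset.mem_filter]
    refine ⟨Finset.mem_univ _, hfu, ?_, ?_⟩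
    · intro i hi
      have hiS : i ∉ S := by
        rw [hS, Finset.mem_filter]
        rintro ⟨-, h1⟩
        rw [show u i = 0 from hi] at h1
        exact absurd h1 (by decide)
      have h0 := hU0 i hiS
      funext j
      show U i (j : Fin m) = 0
      rw [h0]
    · funext j
      show w j = orFam u W j
      unfold orFam
      have hcond : (∃ i, u i = 1 ∧ W i j = 1) ↔ (∃ i ∈ S, U i (j : Fin m) = 1) := by
        constructor
        · rintro ⟨i, h1, h2⟩
          exact ⟨i, Finset.mem_filter.mpr ⟨Finset.mem_univ _, h1⟩, h2⟩
        · rintro ⟨i, h1, h2⟩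
          exact ⟨i, (Finset.mem_filter.mp h1).2, h2⟩
      have hwj : w j = combine I w s (j : Fin m) := (combine_coeI I w s j).symm
      by_cases hc : ∃ i, u i = 1 ∧ W i j = 1
      · rw [if_pos hc, hwj]
        exact (hUor _).mpr (hcond.mp hc)
      · rw [if_neg hc, hwj]
        rcases z2 (combine I w s (j : Fin m)) with h | h
        · exact h
        · exact absurd (hcond.mpr ((hUor _).mp h)) hc
  -- final chain
  have hsum : ((wt s : ℤ) : WithBot ℤ) ≤ ∑ i ∈ S, V i (W i) := by
    have h1 : ((wt s : ℤ) : WithBot ℤ) ≤ ((∑ i ∈ S, (wt (T i) : ℤ) : ℤ) : WithBot ℤ) := by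
      apply WithBot.coe_le_coe.mpr
      exact_mod_cast hwt
    have h2 : ((∑ i ∈ S, (wt (T i) : ℤ) : ℤ) : WithBot ℤ)
        = ∑ i ∈ S, ((wt (T i) : ℤ) : WithBot ℤ) := by
      push_cast
      rfl
    have h3 : ∑ i ∈ S, ((wt (T i) : ℤ) : WithBot ℤ) ≤ ∑ i ∈ S, V i (W i) := by
      apply Finset.sum_le_sum
      intro i hi
      have h4 : ((wt (T i) : ℤ) : WithBot ℤ) ≤ vdeg (fun x => g x i) I (W i) := by
        unfold vdeg deg
        exact Finset.le_sup (f := fun t => ((wt t : ℤ) : WithBot ℤ))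
          (Finset.mem_filter.mpr ⟨Finset.mem_univ _, hcoef i hi⟩)
      exact le_trans h4 (hV i (W i))
    rw [h2] at h1
    exact le_trans h1 h3
  refine le_trans hsum ?_
  unfold VDEG
  exact Finset.le_sup (f := fun p : (Fin n → ZMod 2) × (Fin n → ↥I → ZMod 2) =>
    ∑ i ∈ Finset.univ.filter (fun i => p.1 i = 1), V i (p.2 i)) hmem
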